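/- Fix ν ≥ 1, d ≥ 1, and a Hermitian ν×ν complex matrix H₀. For each ordered pair (j,k) with j,k ∈ {1,…,ν} let T_{jk} be a finite list of vectors in ℤ^d such that T_{kj} consists exactly of the negatives of the elements of T_{jk} (as multisets). For ϑ ∈ ℝ^d define the ν×ν matrix H(ϑ) by H(ϑ)_{jk} = (H₀)_{jk} − ∑_{τ ∈ T_{jk}} e^{i⟨τ, ϑ⟩}, where ⟨·,·⟩ is the standard inner product. Then each H(ϑ) is Hermitian and ∑_{n=1}^{ν} ( sup_{ϑ ∈ ℝ^d} λ_n(H(ϑ)) − inf_{ϑ ∈ ℝ^d} λ_n(H(ϑ)) ) ≤ 2 ∑_{j,k=1}^{ν} |T_{jk}|, where |T_{jk}| is the number of elements of the list T_{jk}. -/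

import Mathlib

open Matrix

/-- The eigenvalues of a Hermitian matrix, listed in increasing order
(counted with multiplicity). -/
noncomputable def eigs {ν : ℕ} {A : Matrix (Fin ν) (Fin ν) ℂ} (hA : A.IsHermitian) :
    Fin ν → ℝ :=
  hA.eigenvalues ∘ ⇑(Tuple.sort hA.eigenvalues)

namespace Band

variable {ν : ℕ}

lemma coeff_zero (b : OrthonormalBasis (Fin ν) ℂ (EuclideanSpace ℂ (Fin ν))) {κ : Type*}
    (f : κ → Fin ν) {x : EuclideanSpace ℂ (Fin ν)}
    (hx : x ∈ Submodule.span ℂ (Set.range fun i : κ => b (f i))) {j : Fin ν}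
    (hj : ∀ i, f i ≠ j) :
    (inner ℂ (b j) x : ℂ) = 0 := by
  induction hx using Submodule.span_induction with
  | mem y hy =>
      obtain ⟨i, rfl⟩ := hy
      exact b.orthonormal.2 (fun h : j = f i => (hj i) h.symm)
  | zero => exact inner_zero_right _
  | add u v _ _ hu hv => rw [inner_add_right, hu, hv, add_zero]
  | smul a u _ hu => rw [inner_smul_right, hu, mul_zero]

lemma inner_self_formula (b : OrthonormalBasis (Fin ν) ℂ (EuclideanSpace ℂ (Fin ν)))
    (x : EuclideanSpace ℂ (Fin ν)) :
    (inner ℂ x x : ℂ).re = ∑ j, Complex.normSq (inner ℂ (b j) x : ℂ) := by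
  rw [← b.sum_inner_mul_inner x x, Complex.re_sum]
  refine Finset.sum_congr rfl fun j _ => ?_
  rw [← inner_conj_symm x (b j)]
  rw [show (starRingEnd ℂ) (inner ℂ (b j) x : ℂ) * (inner ℂ (b j) x : ℂ)
      = (inner ℂ (b j) x : ℂ) * (starRingEnd ℂ) (inner ℂ (b j) x : ℂ) from mul_comm _ _,
    Complex.mul_conj, Complex.ofReal_re]

lemma inner_toEuclideanLin_formula {A : Matrix (Fin ν) (Fin ν) ℂ} (hA : A.IsHermitian)
    (x : EuclideanSpace ℂ (Fin ν)) :
    (inner ℂ x (Matrix.toEuclideanLin A x) : ℂ).re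
      = ∑ j, hA.eigenvalues j * Complex.normSq (inner ℂ (hA.eigenvectorBasis j) x : ℂ) := by
  have hb : ∀ j, Matrix.toEuclideanLin A (hA.eigenvectorBasis j)
      = (hA.eigenvalues j : ℂ) • hA.eigenvectorBasis j := by
    intro j
    ext i
    have h := congrFun (hA.mulVec_eigenvectorBasis j) i
    simpa [Matrix.toEuclideanLin_apply, PiLp.smul_apply, Pi.smul_apply,
      Complex.real_smul, smul_eq_mul] using h
  have hsym := Matrix.isHermitian_iff_isSymmetric.1 hA
  have key : ∀ j, (inner ℂ (hA.eigenvectorBasis j) (Matrix.toEuclideanLin A x) : ℂ)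
      = (hA.eigenvalues j : ℂ) * inner ℂ (hA.eigenvectorBasis j) x := by
    intro j
    rw [← hsym (hA.eigenvectorBasis j) x, hb j, inner_smul_left, Complex.conj_ofReal]
  rw [← (hA.eigenvectorBasis).sum_inner_mul_inner x (Matrix.toEuclideanLin A x), Complex.re_sum]
  refine Finset.sum_congr rfl fun j _ => ?_
  rw [key j, ← inner_conj_symm x (hA.eigenvectorBasis j)]
  set c : ℂ := inner ℂ (hA.eigenvectorBasis j) x with hc
  rw [show (starRingEnd ℂ) c * ((hA.eigenvalues j : ℂ) * c)
      = (hA.eigenvalues j : ℂ) * (c * (starRingEnd ℂ) c) from by ring,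
    Complex.mul_conj, ← Complex.ofReal_mul, Complex.ofReal_re]

end Band

namespace Band2
open Band

variable {ν : ℕ}

lemma card_split (n : Fin ν) :
    Fintype.card {i : Fin ν // n ≤ i} + Fintype.card {i : Fin ν // i ≤ n} = ν + 1 := by
  classical
  rw [Fintype.card_subtype, Fintype.card_subtype]
  have key := Finset.card_union_add_card_inter
    (Finset.univ.filter fun i : Fin ν => n ≤ i) (Finset.univ.filter fun i : Fin ν => i ≤ n)
  have h1 : ((Finset.univ.filter fun i : Fin ν => n ≤ i) ∪
      (Finset.univ.filter fun i : Fin ν => i ≤ n)) = Finset.univ := by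
    ext i; simpa using le_total n i
  have h2 : ((Finset.univ.filter fun i : Fin ν => n ≤ i) ∩
      (Finset.univ.filter fun i : Fin ν => i ≤ n)) = {n} := by
    ext i
    simp only [Finset.mem_inter, Finset.mem_filter, Finset.mem_univ, true_and,
      Finset.mem_singleton, Fin.le_def, Fin.ext_iff]
    omega
  rw [h1, h2, Finset.card_univ, Fintype.card_fin, Finset.card_singleton] at key
  omega

lemma exists_mem_inf_ne_zero (b₁ b₂ : OrthonormalBasis (Fin ν) ℂ (EuclideanSpace ℂ (Fin ν)))
    (σ₁ σ₂ : Equiv.Perm (Fin ν)) (n : Fin ν) :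
    ∃ x : EuclideanSpace ℂ (Fin ν),
      (x ∈ Submodule.span ℂ (Set.range fun i : {i : Fin ν // n ≤ i} => b₁ (σ₁ i))) ∧
      (x ∈ Submodule.span ℂ (Set.range fun i : {i : Fin ν // i ≤ n} => b₂ (σ₂ i))) ∧ x ≠ 0 := by
  classical
  set U := Submodule.span ℂ (Set.range fun i : {i : Fin ν // n ≤ i} => b₁ (σ₁ i)) with hUdef
  set V := Submodule.span ℂ (Set.range fun i : {i : Fin ν // i ≤ n} => b₂ (σ₂ i)) with hVdef
  have hU : Module.finrank ℂ U = Fintype.card {i : Fin ν // n ≤ i} :=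
    finrank_span_eq_card
      (b₁.orthonormal.linearIndependent.comp _ (σ₁.injective.comp Subtype.val_injective))
  have hV : Module.finrank ℂ V = Fintype.card {i : Fin ν // i ≤ n} :=
    finrank_span_eq_card
      (b₂.orthonormal.linearIndependent.comp _ (σ₂.injective.comp Subtype.val_injective))
  have hcard := card_split n
  have hne : U ⊓ V ≠ ⊥ := by
    intro hbot
    have hsum := Submodule.finrank_sup_add_finrank_inf_eq U V
    rw [hbot, finrank_bot, add_zero] at hsum
    have hle : Module.finrank ℂ ↥(U ⊔ V) ≤ ν := by
      simpa [finrank_euclideanSpace_fin] using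
        Submodule.finrank_le (U ⊔ V)
    omega
  obtain ⟨x, hx, hx0⟩ := (Submodule.ne_bot_iff _).1 hne
  exact ⟨x, (Submodule.mem_inf.1 hx).1, (Submodule.mem_inf.1 hx).2, hx0⟩

lemma rayleigh_ge {A : Matrix (Fin ν) (Fin ν) ℂ} (hA : A.IsHermitian) (n : Fin ν)
    (x : EuclideanSpace ℂ (Fin ν))
    (hx : x ∈ Submodule.span ℂ (Set.range fun i : {i : Fin ν // n ≤ i} =>
      hA.eigenvectorBasis (Tuple.sort hA.eigenvalues i))) :
    eigs hA n * (inner ℂ x x : ℂ).re ≤ (inner ℂ x (Matrix.toEuclideanLin A x) : ℂ).re := by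
  classical
  rw [inner_self_formula hA.eigenvectorBasis x, inner_toEuclideanLin_formula hA x,
    Finset.mul_sum]
  refine Finset.sum_le_sum fun j _ => ?_
  by_cases hj : ∃ i : {i : Fin ν // n ≤ i}, Tuple.sort hA.eigenvalues i = j
  · obtain ⟨⟨i, hi⟩, rfl⟩ := hj
    exact mul_le_mul_of_nonneg_right (Tuple.monotone_sort hA.eigenvalues hi)
      (Complex.normSq_nonneg _)
  · rw [coeff_zero _ _ hx (fun i h => hj ⟨i, h⟩)]
    simp

lemma rayleigh_le {B : Matrix (Fin ν) (Fin ν) ℂ} (hB : B.IsHermitian) (n : Fin ν)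
    (x : EuclideanSpace ℂ (Fin ν))
    (hx : x ∈ Submodule.span ℂ (Set.range fun i : {i : Fin ν // i ≤ n} =>
      hB.eigenvectorBasis (Tuple.sort hB.eigenvalues i))) :
    (inner ℂ x (Matrix.toEuclideanLin B x) : ℂ).re ≤ eigs hB n * (inner ℂ x x : ℂ).re := by
  classical
  rw [inner_self_formula hB.eigenvectorBasis x, inner_toEuclideanLin_formula hB x,
    Finset.mul_sum]
  refine Finset.sum_le_sum fun j _ => ?_
  by_cases hj : ∃ i : {i : Fin ν // i ≤ n}, Tuple.sort hB.eigenvalues i = j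
  · obtain ⟨⟨i, hi⟩, rfl⟩ := hj
    exact mul_le_mul_of_nonneg_right (Tuple.monotone_sort hB.eigenvalues hi)
      (Complex.normSq_nonneg _)
  · rw [coeff_zero _ _ hx (fun i h => hj ⟨i, h⟩)]
    simp

theorem eigs_le_eigs {A B : Matrix (Fin ν) (Fin ν) ℂ} (hA : A.IsHermitian) (hB : B.IsHermitian)
    (h : ∀ x : Fin ν → ℂ, 0 ≤ (dotProduct (star x) ((B - A) *ᵥ x)).re)
    (n : Fin ν) : eigs hA n ≤ eigs hB n := by
  obtain ⟨x, hxA, hxB, hx0⟩ := exists_mem_inf_ne_zero hA.eigenvectorBasis hB.eigenvectorBasis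
    (Tuple.sort hA.eigenvalues) (Tuple.sort hB.eigenvalues) n
  have h1 := rayleigh_ge hA n x hxA
  have h2 := rayleigh_le hB n x hxB
  have hd : (inner ℂ x (Matrix.toEuclideanLin B x) : ℂ) - inner ℂ x (Matrix.toEuclideanLin A x)
      = inner ℂ x (Matrix.toEuclideanLin (B - A) x) := by
    rw [map_sub, LinearMap.sub_apply, inner_sub_right]
  have h4 : (inner ℂ x (Matrix.toEuclideanLin (B - A) x) : ℂ)
      = dotProduct (star (WithLp.equiv 2 _ x)) ((B - A) *ᵥ (WithLp.equiv 2 _ x)) :=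
        (EuclideanSpace.inner_eq_star_dotProduct _ _).trans (dotProduct_comm _ _)
  have h3 := h (WithLp.equiv 2 _ x)
  rw [← h4] at h3
  have hmid : (inner ℂ x (Matrix.toEuclideanLin A x) : ℂ).re
      ≤ (inner ℂ x (Matrix.toEuclideanLin B x) : ℂ).re := by
    have h5 : (inner ℂ x (Matrix.toEuclideanLin B x) : ℂ).re
        - (inner ℂ x (Matrix.toEuclideanLin A x) : ℂ).re
        = (inner ℂ x (Matrix.toEuclideanLin (B - A) x) : ℂ).re := by
      rw [← Complex.sub_re, hd]
    linarith
  have hpos : 0 < (inner ℂ x x : ℂ).re := by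
    have h6 := inner_self_eq_norm_sq (𝕜 := ℂ) x
    rw [RCLike.re_to_complex] at h6
    rw [h6]
    exact pow_pos (norm_pos_iff.mpr hx0) 2
  exact le_of_mul_le_mul_right (by linarith) hpos

end Band2

namespace Band3

variable {ν : ℕ}

lemma sum_eigs_eq {M : Matrix (Fin ν) (Fin ν) ℂ} (hM : M.IsHermitian) :
    ∑ n, eigs hM n = M.trace.re := by
  have h1 : ∑ n, eigs hM n = ∑ n, hM.eigenvalues n :=
    Equiv.sum_comp (Tuple.sort hM.eigenvalues) hM.eigenvalues
  have h2 : M.trace = ∑ n, (hM.eigenvalues n : ℂ) := by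
    conv_lhs => rw [hM.spectral_theorem]
    rw [Unitary.conjStarAlgAut_apply, Matrix.trace_mul_cycle, Matrix.mem_unitaryGroup_iff'.mp (hM.eigenvectorUnitary).2,
      one_mul, Matrix.trace_diagonal]
    simp
  rw [h1, h2, Complex.re_sum]
  simp

lemma re_conj_mul_aux (c : ℝ) (z : ℂ) : ((starRingEnd ℂ) z * ((c : ℂ) * z)).re
    = c * Complex.normSq z := by
  rw [show (starRingEnd ℂ) z * ((c : ℂ) * z) = (c : ℂ) * (z * (starRingEnd ℂ) z) from by ring,
    Complex.mul_conj, ← Complex.ofReal_mul, Complex.ofReal_re]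

lemma psd_aux (t : Fin ν → Fin ν → ℝ) (ht : ∀ j k, t j k = t k j)
    (M : Matrix (Fin ν) (Fin ν) ℂ) (hM : ∀ j k, ‖M j k‖ ≤ t j k)
    (x : Fin ν → ℂ) :
    0 ≤ (dotProduct (star x)
      ((Matrix.diagonal (fun j => ((∑ k, t j k : ℝ) : ℂ)) + M) *ᵥ x)).re := by
  classical
  have htnn : ∀ j k, 0 ≤ t j k := fun j k => le_trans (norm_nonneg _) (hM j k)
  rw [Matrix.add_mulVec, dotProduct_add, Complex.add_re]
  have hD : (dotProduct (star x)
      (Matrix.diagonal (fun j => ((∑ k, t j k : ℝ) : ℂ)) *ᵥ x)).re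
      = ∑ j, (∑ k, t j k) * Complex.normSq (x j) := by
    rw [dotProduct, Complex.re_sum]
    refine Finset.sum_congr rfl fun j _ => ?_
    rw [Matrix.mulVec_diagonal]
    exact re_conj_mul_aux _ _
  have hexpand : (dotProduct (star x) (M *ᵥ x)).re
      = ∑ j, ∑ k, ((starRingEnd ℂ) (x j) * (M j k * x k)).re := by
    rw [dotProduct, Complex.re_sum]
    refine Finset.sum_congr rfl fun j _ => ?_
    rw [Matrix.mulVec, dotProduct, Finset.mul_sum, Complex.re_sum]
    rfl
  have hterm : ∀ j k : Fin ν, -(t j k * (‖x j‖ * ‖x k‖))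
      ≤ ((starRingEnd ℂ) (x j) * (M j k * x k)).re := by
    intro j k
    have h1 : ‖(starRingEnd ℂ) (x j) * (M j k * x k)‖
        ≤ t j k * (‖x j‖ * ‖x k‖) := by
      rw [norm_mul, norm_mul, Complex.norm_conj]
      have h0 : 0 ≤ ‖x j‖ * ‖x k‖ := by positivity
      have := mul_le_mul_of_nonneg_right (hM j k) h0
      nlinarith [norm_nonneg (x j), norm_nonneg (x k), norm_nonneg (M j k)]
    have h2 := (abs_le.1 (Complex.abs_re_le_norm ((starRingEnd ℂ) (x j) * (M j k * x k)))).1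
    linarith
  have hbound : ∑ j, ∑ k, (t j k * (‖x j‖ * ‖x k‖))
      ≤ ∑ j, (∑ k, t j k) * Complex.normSq (x j) := by
    have step1 : ∀ j k : Fin ν, t j k * (‖x j‖ * ‖x k‖)
        ≤ t j k * ((‖x j‖)^2 + (‖x k‖)^2) / 2 := by
      intro j k
      nlinarith [sq_nonneg (‖x j‖ - ‖x k‖), htnn j k]
    calc ∑ j, ∑ k, (t j k * (‖x j‖ * ‖x k‖))
        ≤ ∑ j, ∑ k, t j k * ((‖x j‖)^2 + (‖x k‖)^2) / 2 :=
          Finset.sum_le_sum fun j _ => Finset.sum_le_sum fun k _ => step1 j k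
      _ = (∑ j, ∑ k, t j k * (‖x j‖)^2 / 2)
          + ∑ j, ∑ k, t j k * (‖x k‖)^2 / 2 := by
          rw [← Finset.sum_add_distrib]
          refine Finset.sum_congr rfl fun j _ => ?_
          rw [← Finset.sum_add_distrib]
          exact Finset.sum_congr rfl fun k _ => by ring
      _ = (∑ j, ∑ k, t j k * (‖x j‖)^2 / 2)
          + ∑ j, ∑ k, t j k * (‖x j‖)^2 / 2 := by
          congr 1
          rw [Finset.sum_comm]
          refine Finset.sum_congr rfl fun j _ => Finset.sum_congr rfl fun k _ => ?_
          rw [ht j k]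
      _ = ∑ j, (∑ k, t j k) * Complex.normSq (x j) := by
          rw [← Finset.sum_add_distrib]
          refine Finset.sum_congr rfl fun j _ => ?_
          rw [← Finset.sum_add_distrib, Finset.sum_mul]
          refine Finset.sum_congr rfl fun k _ => ?_
          rw [← Complex.sq_norm]
          ring
  have hM2 : -(∑ j, (∑ k, t j k) * Complex.normSq (x j))
      ≤ (dotProduct (star x) (M *ᵥ x)).re := by
    rw [hexpand]
    have := Finset.sum_le_sum (fun j (_ : j ∈ Finset.univ) =>
      Finset.sum_le_sum fun k (_ : k ∈ Finset.univ) => hterm j k)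
    have hneg : ∑ j, ∑ k, -(t j k * (‖x j‖ * ‖x k‖))
        = -(∑ j, ∑ k, (t j k * (‖x j‖ * ‖x k‖))) := by
      simp [Finset.sum_neg_distrib]
    rw [hneg] at this
    linarith
  rw [hD]
  linarith

end Band3
namespace Band4

lemma abs_multiset_sum_le_card (m : Multiset ℂ) (h : ∀ z ∈ m, ‖z‖ ≤ 1) :
    ‖m.sum‖ ≤ (Multiset.card m : ℝ) := by
  induction m using Multiset.induction_on with
  | empty => simp
  | cons a s ih =>
      rw [Multiset.sum_cons]
      have h1 := h a (Multiset.mem_cons_self a s)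
      have h2 := ih (fun z hz => h z (Multiset.mem_cons_of_mem hz))
      calc ‖a + s.sum‖ ≤ ‖a‖ + ‖s.sum‖ :=
            norm_add_le _ _
        _ ≤ 1 + (Multiset.card s : ℝ) := add_le_add h1 h2
        _ = (Multiset.card (a ::ₘ s) : ℝ) := by rw [Multiset.card_cons]; push_cast; ring

variable {d : ℕ}

lemma abs_exp_I_mul (τ : Fin d → ℤ) (ϑ : Fin d → ℝ) :
    ‖Complex.exp (Complex.I * ∑ s : Fin d, (τ s : ℝ) * ϑ s)‖ = 1 := by
  rw [Complex.norm_exp]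
  simp [Complex.mul_re]

lemma neg_sum_real (τ : Fin d → ℤ) (ϑ : Fin d → ℝ) :
    (∑ s : Fin d, ((-τ) s : ℝ) * ϑ s) = -∑ s : Fin d, (τ s : ℝ) * ϑ s := by
  rw [← Finset.sum_neg_distrib]
  refine Finset.sum_congr rfl fun s _ => ?_
  push_cast [Pi.neg_apply]
  ring

lemma star_exp_neg (τ : Fin d → ℤ) (ϑ : Fin d → ℝ) :
    (starRingEnd ℂ) (Complex.exp (Complex.I * ∑ s : Fin d, ((-τ) s : ℝ) * ϑ s))
      = Complex.exp (Complex.I * ∑ s : Fin d, (τ s : ℝ) * ϑ s) := by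
  rw [← Complex.exp_conj]
  congr 1
  rw [_root_.map_mul, Complex.conj_I, Complex.conj_ofReal, neg_sum_real]
  push_cast
  ring

end Band4

/-- The Floquet fiber matrix `H(ϑ)ⱼₖ = (H₀)ⱼₖ − ∑_{τ ∈ T j k} e^{i⟨τ,ϑ⟩}`. -/
noncomputable def fiber {ν d : ℕ} (H₀ : Matrix (Fin ν) (Fin ν) ℂ)
    (T : Fin ν → Fin ν → Multiset (Fin d → ℤ)) (ϑ : Fin d → ℝ) :
    Matrix (Fin ν) (Fin ν) ℂ :=
  fun j k => H₀ j k -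
    ((T j k).map fun τ => Complex.exp (Complex.I * ∑ s : Fin d, (τ s : ℝ) * ϑ s)).sum

/-- each fiber matrix `H(ϑ)` is Hermitian and the total length of the
bands `[inf_ϑ λₙ(H(ϑ)), sup_ϑ λₙ(H(ϑ))]` is at most `2 ∑ⱼₖ |T j k|` (twice the
number of bridges). -/
theorem total_band_length_le_bridges (ν d : ℕ) (hν : 1 ≤ ν) (hd : 1 ≤ d)
    (H₀ : Matrix (Fin ν) (Fin ν) ℂ) (hH₀ : H₀.IsHermitian)
    (T : Fin ν → Fin ν → Multiset (Fin d → ℤ))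
    (hT : ∀ j k : Fin ν, T k j = (T j k).map fun τ => -τ) :
    ∃ hherm : ∀ ϑ : Fin d → ℝ, (fiber H₀ T ϑ).IsHermitian,
      ∑ n : Fin ν,
          ((⨆ ϑ : Fin d → ℝ, eigs (hherm ϑ) n) - ⨅ ϑ : Fin d → ℝ, eigs (hherm ϑ) n) ≤
        2 * ∑ j : Fin ν, ∑ k : Fin ν, (Multiset.card (T j k) : ℝ) := by
  classical
  -- star of the multiset sums
  have hstar : ∀ (ϑ : Fin d → ℝ) (j k : Fin ν),
      star (((T k j).map fun τ =>
          Complex.exp (Complex.I * ∑ s : Fin d, (τ s : ℝ) * ϑ s)).sum)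
        = ((T j k).map fun τ =>
          Complex.exp (Complex.I * ∑ s : Fin d, (τ s : ℝ) * ϑ s)).sum := by
    intro ϑ j k
    rw [hT j k, Multiset.map_map, Complex.star_def, map_multiset_sum, Multiset.map_map]
    exact congrArg Multiset.sum (Multiset.map_congr rfl fun τ _ => Band4.star_exp_neg τ ϑ)
  have hherm : ∀ ϑ : Fin d → ℝ, (fiber H₀ T ϑ).IsHermitian := by
    intro ϑ
    show (fiber H₀ T ϑ)ᴴ = fiber H₀ T ϑ
    ext j k
    rw [Matrix.conjTranspose_apply]
    simp only [fiber]
    rw [star_sub, hstar ϑ j k]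
    congr 1
    have h0 := congrFun (congrFun hH₀ j) k
    rwa [Matrix.conjTranspose_apply] at h0
  refine ⟨hherm, ?_⟩
  -- the comparison matrices
  set t : Fin ν → Fin ν → ℝ := fun j k => (Multiset.card (T j k) : ℝ) with htdef
  have htsymm : ∀ j k, t j k = t k j := by
    intro j k
    simp only [htdef]
    rw [hT j k, Multiset.card_map]
  set V : (Fin d → ℝ) → Matrix (Fin ν) (Fin ν) ℂ := fun ϑ j k =>
    ((T j k).map fun τ =>
      Complex.exp (Complex.I * ∑ s : Fin d, (τ s : ℝ) * ϑ s)).sum with hVdef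
  have hfib : ∀ ϑ, fiber H₀ T ϑ = H₀ - V ϑ := fun ϑ => rfl
  have hVabs : ∀ ϑ j k, ‖V ϑ j k‖ ≤ t j k := by
    intro ϑ j k
    have h1 : ‖V ϑ j k‖ ≤ (Multiset.card ((T j k).map fun τ =>
        Complex.exp (Complex.I * ∑ s : Fin d, (τ s : ℝ) * ϑ s)) : ℝ) := by
      refine Band4.abs_multiset_sum_le_card _ fun z hz => ?_
      obtain ⟨τ, _, rfl⟩ := Multiset.mem_map.1 hz
      rw [Band4.abs_exp_I_mul]
    rwa [Multiset.card_map] at h1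
  set Pd : Matrix (Fin ν) (Fin ν) ℂ :=
    Matrix.diagonal (fun j => ((∑ k, t j k : ℝ) : ℂ)) with hPdef
  have hPherm : Pd.IsHermitian := by
    rw [Matrix.IsHermitian, hPdef, Matrix.diagonal_conjTranspose]
    refine congrArg Matrix.diagonal (funext fun j => ?_)
    simp only [Pi.star_apply, star_sum, Complex.star_def, Complex.conj_ofReal]
  have hU : (H₀ + Pd).IsHermitian := hH₀.add hPherm
  have hL : (H₀ - Pd).IsHermitian := hH₀.sub hPherm
  have keyU : ∀ (ϑ : Fin d → ℝ) (n : Fin ν), eigs (hherm ϑ) n ≤ eigs hU n := by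
    intro ϑ n
    refine Band2.eigs_le_eigs _ _ (fun x => ?_) n
    have hBA : (H₀ + Pd) - fiber H₀ T ϑ = Pd + V ϑ := by rw [hfib]; abel
    rw [hBA]
    exact Band3.psd_aux t htsymm (V ϑ) (hVabs ϑ) x
  have keyL : ∀ (ϑ : Fin d → ℝ) (n : Fin ν), eigs hL n ≤ eigs (hherm ϑ) n := by
    intro ϑ n
    refine Band2.eigs_le_eigs _ _ (fun x => ?_) n
    have hBA : fiber H₀ T ϑ - (H₀ - Pd) = Pd + -(V ϑ) := by rw [hfib]; abel
    rw [hBA]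
    refine Band3.psd_aux t htsymm (-(V ϑ)) (fun j k => ?_) x
    rw [Matrix.neg_apply]
    simpa using hVabs ϑ j k
  calc ∑ n : Fin ν, ((⨆ ϑ : Fin d → ℝ, eigs (hherm ϑ) n) - ⨅ ϑ : Fin d → ℝ, eigs (hherm ϑ) n)
      ≤ ∑ n : Fin ν, (eigs hU n - eigs hL n) := by
        refine Finset.sum_le_sum fun n _ => sub_le_sub ?_ ?_
        · exact ciSup_le fun ϑ => keyU ϑ n
        · exact le_ciInf fun ϑ => keyL ϑ n
    _ = 2 * ∑ j : Fin ν, ∑ k : Fin ν, (Multiset.card (T j k) : ℝ) := by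
        rw [Finset.sum_sub_distrib, Band3.sum_eigs_eq hU, Band3.sum_eigs_eq hL,
          Matrix.trace_add, Matrix.trace_sub]
        have hPt : Pd.trace = ((∑ j, ∑ k, t j k : ℝ) : ℂ) := by
          rw [hPdef, Matrix.trace_diagonal]
          push_cast
          rfl
        rw [Complex.add_re, Complex.sub_re, hPt, Complex.ofReal_re]
        simp only [htdef]
        ring
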